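/- On an almost Golden Riemannian manifold, the almost Golden structure φ is integrable (N_φ = 0) if and only if the torsion T⁰ of the first canonical connection vanishes on pairs of vector fields both lying in D_ϕ (the ϕ-eigendistribution of φ) and on pairs both lying in D_{ϕ̄} (the ϕ̄-eigendistribution). -/

import Mathlib

/-- Nijenhuis tensor `N_A(X,Y) = A²[X,Y] + [AX,AY] − A[AX,Y] − A[X,AY]`. -/
def nijenhuis {V : Type*} [LieRing V] [LieAlgebra ℝ V] (A : V →ₗ[ℝ] V) (X Y : V) : V :=
  A (A ⁅X, Y⁆) + ⁅A X, A Y⁆ - A ⁅A X, Y⁆ - A ⁅X, A Y⁆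

/-- The induced almost product structure `J_φ = (1/√5)(2φ − Id)`. -/
noncomputable def inducedJ {V : Type*} [AddCommGroup V] [Module ℝ V] (φ : V →ₗ[ℝ] V) : V →ₗ[ℝ] V :=
  (Real.sqrt 5)⁻¹ • (2 • φ - LinearMap.id)

/-- The first canonical covariant derivative `∇⁰_X Y = ∇_X Y − (1/2)(∇_X J)(J Y)`. -/
noncomputable def firstCanonical {V : Type*} [AddCommGroup V] [Module ℝ V]
    (nab : V →ₗ[ℝ] V →ₗ[ℝ] V) (J : V →ₗ[ℝ] V) (X Y : V) : V :=
  nab X Y - ((1 : ℝ)/2) • (nab X (J (J Y)) - J (nab X (J Y)))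

/-- The torsion `T⁰(X,Y) = ∇⁰_X Y − ∇⁰_Y X − [X,Y]` of the first canonical connection. -/
noncomputable def torsion0 {V : Type*} [LieRing V] [LieAlgebra ℝ V]
    (nab : V →ₗ[ℝ] V →ₗ[ℝ] V) (J : V →ₗ[ℝ] V) (X Y : V) : V :=
  firstCanonical nab J X Y - firstCanonical nab J Y X - ⁅X, Y⁆

/-! The Golden structure is an affine function of its induced almost product structure,
`φ = ½ + (√5/2) J` with `J² = 1`, so `N_φ = (5/4) N_J` and `D_ϕ`, `D_ϕ̄` are the `±1`-eigenspaces
of `J`. On a pair `X, Y` of eigenvectors of `J` for the same eigenvalue `ε`, both `N_J(X,Y)` and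
`T⁰(X,Y)` are multiples of `J[X,Y] − ε[X,Y]` (in fact `N_J = −4 T⁰`), while `N_J` vanishes on pairs
from opposite eigenspaces; splitting arbitrary vectors into eigencomponents gives the
equivalence. -/

section Nijenhuis

variable {V : Type*} [LieRing V] [LieAlgebra ℝ V]

lemma nijenhuis_add_left (A : V →ₗ[ℝ] V) (X X' Y : V) :
    nijenhuis A (X + X') Y = nijenhuis A X Y + nijenhuis A X' Y := by
  simp only [nijenhuis, add_lie, map_add]
  abel

lemma nijenhuis_add_right (A : V →ₗ[ℝ] V) (X Y Y' : V) :
    nijenhuis A X (Y + Y') = nijenhuis A X Y + nijenhuis A X Y' := by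
  simp only [nijenhuis, lie_add, map_add]
  abel

lemma nijenhuis_smul_id_add_smul (A : V →ₗ[ℝ] V) (a b : ℝ) (X Y : V) :
    nijenhuis (a • LinearMap.id + b • A) X Y = b ^ 2 • nijenhuis A X Y := by
  simp only [nijenhuis, LinearMap.add_apply, LinearMap.smul_apply, LinearMap.id_apply,
    map_add, map_smul, add_lie, lie_add, smul_lie, lie_smul]
  module

lemma nijenhuis_of_eigen (A : V →ₗ[ℝ] V) {a b : ℝ} {X Y : V} (hX : A X = a • X)
    (hY : A Y = b • Y) :
    nijenhuis A X Y = A (A ⁅X, Y⁆) - (a + b) • A ⁅X, Y⁆ + (a * b) • ⁅X, Y⁆ := by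
  simp only [nijenhuis, hX, hY, lie_smul, smul_lie, map_smul]
  module

end Nijenhuis

section AlmostProduct

variable {V : Type*} [LieRing V] [LieAlgebra ℝ V] {J : V →ₗ[ℝ] V}

lemma torsion0_of_eigen {nab : V →ₗ[ℝ] V →ₗ[ℝ] V}
    (htf : ∀ X Y : V, nab X Y - nab Y X = ⁅X, Y⁆) {ε : ℝ} (hε : ε * ε = 1) {X Y : V}
    (hX : J X = ε • X) (hY : J Y = ε • Y) :
    torsion0 nab J X Y = (1 / 2 : ℝ) • (ε • J ⁅X, Y⁆ - ⁅X, Y⁆) := by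
  have hJtf : J (nab X Y) - J (nab Y X) = J ⁅X, Y⁆ := by rw [← map_sub, htf]
  simp only [torsion0, firstCanonical, hX, hY, map_smul, smul_smul, hε, one_smul]
  linear_combination (norm := module) (1 / 2 : ℝ) • htf X Y + (ε / 2) • hJtf

variable (hJ : J ∘ₗ J = LinearMap.id)
include hJ

lemma nijenhuis_eq_neg_four_smul_torsion0_of_eigen {nab : V →ₗ[ℝ] V →ₗ[ℝ] V}
    (htf : ∀ X Y : V, nab X Y - nab Y X = ⁅X, Y⁆) {ε : ℝ} (hε : ε * ε = 1) {X Y : V}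
    (hX : J X = ε • X) (hY : J Y = ε • Y) :
    nijenhuis J X Y = (-4 : ℝ) • torsion0 nab J X Y := by
  have hJJ : J (J ⁅X, Y⁆) = ⁅X, Y⁆ := LinearMap.congr_fun hJ _
  rw [nijenhuis_of_eigen J hX hY, torsion0_of_eigen htf hε hX hY, hJJ, hε]
  module

lemma nijenhuis_eq_zero_of_eigen_neg {ε : ℝ} (hε : ε * ε = 1) {X Y : V}
    (hX : J X = ε • X) (hY : J Y = (-ε) • Y) : nijenhuis J X Y = 0 := by
  have hJJ : J (J ⁅X, Y⁆) = ⁅X, Y⁆ := LinearMap.congr_fun hJ _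
  rw [nijenhuis_of_eigen J hX hY, hJJ, add_neg_cancel, mul_neg, hε]
  module

lemma exists_add_eigen_one_eigen_neg_one (v : V) :
    ∃ p q : V, v = p + q ∧ J p = (1 : ℝ) • p ∧ J q = (-1 : ℝ) • q := by
  have hJJ : J (J v) = v := LinearMap.congr_fun hJ v
  refine ⟨(1 / 2 : ℝ) • (v + J v), (1 / 2 : ℝ) • (v - J v), by module, ?_, ?_⟩ <;>
  · simp only [map_smul, map_add, map_sub, hJJ]
    module

theorem nijenhuis_eq_zero_iff_torsion0_eigen {nab : V →ₗ[ℝ] V →ₗ[ℝ] V}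
    (htf : ∀ X Y : V, nab X Y - nab Y X = ⁅X, Y⁆) :
    (∀ X Y : V, nijenhuis J X Y = 0) ↔
      ((∀ X Y : V, J X = X → J Y = Y → torsion0 nab J X Y = 0)
        ∧ (∀ X Y : V, J X = -X → J Y = -Y → torsion0 nab J X Y = 0)) := by
  have hpos : ∀ {Z : V}, J Z = Z ↔ J Z = (1 : ℝ) • Z := by simp
  have hneg : ∀ {Z : V}, J Z = -Z ↔ J Z = (-1 : ℝ) • Z := by simp
  have hN_same : ∀ {ε : ℝ}, ε * ε = 1 → ∀ {X Y : V}, J X = ε • X → J Y = ε • Y →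
      (nijenhuis J X Y = 0 ↔ torsion0 nab J X Y = 0) := fun hε _ _ hX hY => by
    rw [nijenhuis_eq_neg_four_smul_torsion0_of_eigen hJ htf hε hX hY, smul_eq_zero]
    norm_num
  constructor
  · intro hN
    exact ⟨fun X Y hX hY => (hN_same (by norm_num) (hpos.1 hX) (hpos.1 hY)).1 (hN X Y),
      fun X Y hX hY => (hN_same (by norm_num) (hneg.1 hX) (hneg.1 hY)).1 (hN X Y)⟩
  · rintro ⟨hTp, hTm⟩ X Y
    obtain ⟨Xp, Xm, rfl, hXp, hXm⟩ := exists_add_eigen_one_eigen_neg_one hJ X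
    obtain ⟨Yp, Ym, rfl, hYp, hYm⟩ := exists_add_eigen_one_eigen_neg_one hJ Y
    have hYp' : J Yp = (-(-1 : ℝ)) • Yp := by rw [neg_neg, hYp]
    rw [nijenhuis_add_left, nijenhuis_add_right, nijenhuis_add_right,
      (hN_same (by norm_num) hXp hYp).2 (hTp _ _ (hpos.2 hXp) (hpos.2 hYp)),
      (hN_same (by norm_num) hXm hYm).2 (hTm _ _ (hneg.2 hXm) (hneg.2 hYm)),
      nijenhuis_eq_zero_of_eigen_neg hJ (by norm_num) hXp hYm,
      nijenhuis_eq_zero_of_eigen_neg hJ (by norm_num) hXm hYp']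
    simp

end AlmostProduct

lemma apply_eq_smul_iff_of_eq_smul_id_add_smul {V : Type*} [AddCommGroup V] [Module ℝ V]
    {φ J : V →ₗ[ℝ] V} {a b : ℝ} (hb : b ≠ 0) (h : φ = a • LinearMap.id + b • J) (ε : ℝ) (v : V) :
    φ v = (a + b * ε) • v ↔ J v = ε • v := by
  rw [h, LinearMap.add_apply, LinearMap.smul_apply, LinearMap.smul_apply, LinearMap.id_apply,
    add_smul, add_right_inj, mul_smul]
  exact smul_right_inj hb

section Golden

variable {V : Type*} [AddCommGroup V] [Module ℝ V] {φ : V →ₗ[ℝ] V}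

variable (φ) in
lemma eq_half_smul_id_add_inducedJ :
    φ = (1 / 2 : ℝ) • LinearMap.id + (√5 / 2) • inducedJ φ := by
  have h5 : √5 ≠ 0 := by positivity
  ext v
  simp only [inducedJ, LinearMap.add_apply, LinearMap.smul_apply, LinearMap.sub_apply,
    LinearMap.id_apply, smul_smul]
  match_scalars
  · field_simp
  · field_simp
    norm_num

lemma inducedJ_comp_self (hφ : φ ∘ₗ φ = φ + LinearMap.id) :
    inducedJ φ ∘ₗ inducedJ φ = LinearMap.id := by
  have hφφ (v : V) : φ (φ v) = φ v + v := LinearMap.congr_fun hφ v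
  have h5 : √5 ^ 2 = 5 := Real.sq_sqrt (by norm_num)
  ext v
  simp only [inducedJ, LinearMap.comp_apply, LinearMap.smul_apply, LinearMap.sub_apply,
    LinearMap.id_apply, map_smul, map_nsmul, map_sub, hφφ]
  match_scalars <;> field_simp <;> linarith

lemma apply_eq_goldenRatio_smul_iff (v : V) :
    φ v = ((1 + √5) / 2) • v ↔ inducedJ φ v = v := by
  have h : (1 + √5) / 2 = 1 / 2 + √5 / 2 * 1 := by ring
  rw [h, apply_eq_smul_iff_of_eq_smul_id_add_smul (by positivity)
    (eq_half_smul_id_add_inducedJ φ), one_smul]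

lemma apply_eq_goldenConj_smul_iff (v : V) :
    φ v = ((1 - √5) / 2) • v ↔ inducedJ φ v = -v := by
  have h : (1 - √5) / 2 = 1 / 2 + √5 / 2 * (-1) := by ring
  rw [h, apply_eq_smul_iff_of_eq_smul_id_add_smul (by positivity)
    (eq_half_smul_id_add_inducedJ φ), neg_one_smul]

lemma nijenhuis_eq_zero_iff_nijenhuis_inducedJ {V : Type*} [LieRing V] [LieAlgebra ℝ V]
    (φ : V →ₗ[ℝ] V) (X Y : V) :
    nijenhuis φ X Y = 0 ↔ nijenhuis (inducedJ φ) X Y = 0 := by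
  conv_lhs => rw [eq_half_smul_id_add_inducedJ φ]
  rw [nijenhuis_smul_id_add_smul, smul_eq_zero_iff_right (by positivity)]

end Golden

theorem golden_integrable_iff_torsion0_general {V : Type*} [LieRing V] [LieAlgebra ℝ V]
    (φ : V →ₗ[ℝ] V) (hφ : φ ∘ₗ φ = φ + LinearMap.id)
    (nab : V →ₗ[ℝ] V →ₗ[ℝ] V)
    (htf : ∀ X Y : V, nab X Y - nab Y X = ⁅X, Y⁆) :
    (∀ X Y : V, nijenhuis φ X Y = 0) ↔
      ((∀ X Y : V, φ X = ((1 + Real.sqrt 5)/2) • X → φ Y = ((1 + Real.sqrt 5)/2) • Y →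
          torsion0 nab (inducedJ φ) X Y = 0)
        ∧ (∀ X Y : V, φ X = ((1 - Real.sqrt 5)/2) • X → φ Y = ((1 - Real.sqrt 5)/2) • Y →
          torsion0 nab (inducedJ φ) X Y = 0)) := by
  simp only [nijenhuis_eq_zero_iff_nijenhuis_inducedJ φ, apply_eq_goldenRatio_smul_iff,
    apply_eq_goldenConj_smul_iff]
  exact nijenhuis_eq_zero_iff_torsion0_eigen (inducedJ_comp_self hφ) htf

/-- On an almost Golden Riemannian manifold, `φ` is integrable (`N_φ = 0`) iff the
torsion `T⁰` of the first canonical connection vanishes on pairs of vector fields both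
in the `ϕ = (1+√5)/2` eigendistribution `D_ϕ` of `φ` and on pairs both in the
`ϕ̄ = (1−√5)/2` eigendistribution `D_ϕ̄`.  Here `nab` is the Levi-Civita connection. -/
theorem golden_integrable_iff_torsion0 {V A : Type*} [LieRing V] [LieAlgebra ℝ V]
    [CommRing A] [Algebra ℝ A]
    (φ : V →ₗ[ℝ] V) (hφ : φ ∘ₗ φ = φ + LinearMap.id)
    (g : V →ₗ[ℝ] V →ₗ[ℝ] A) (hsym : ∀ X Y : V, g X Y = g Y X)
    (hpure : ∀ X Y : V, g (φ X) Y = g X (φ Y))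
    (Dv : V → A →ₗ[ℝ] A) (hD : ∀ (X : V) (a b : A), Dv X (a * b) = a * Dv X b + b * Dv X a)
    (nab : V →ₗ[ℝ] V →ₗ[ℝ] V)
    (htf : ∀ X Y : V, nab X Y - nab Y X = ⁅X, Y⁆)
    (hmetric : ∀ X Y Z : V, Dv X (g Y Z) = g (nab X Y) Z + g Y (nab X Z)) :
    (∀ X Y : V, nijenhuis φ X Y = 0) ↔
      ((∀ X Y : V, φ X = ((1 + Real.sqrt 5)/2) • X → φ Y = ((1 + Real.sqrt 5)/2) • Y →
          torsion0 nab (inducedJ φ) X Y = 0)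
        ∧ (∀ X Y : V, φ X = ((1 - Real.sqrt 5)/2) • X → φ Y = ((1 - Real.sqrt 5)/2) • Y →
          torsion0 nab (inducedJ φ) X Y = 0)) :=
  golden_integrable_iff_torsion0_general φ hφ nab htf
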